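/- Let s be a real number and let Φ : ℂ → ℂ be differentiable as a map of real normed spaces. Then Φ satisfies the holomorphic-polarization equation (∂_x Φ)(z) + i·(∂_y Φ)(z) = −(2·s·z/(1+|z|²))·Φ(z) for all z ∈ ℂ (equivalently ∂Φ/∂z̄ = −(sz/(1+|z|²))Φ, i.e. D_{z̄}Φ = 0 for the connection A^{(s)} = (is/(1+|z|²))(z̄dz − zdz̄) on the 2-sphere chart) if and only if the function z ↦ Φ(z)·(1+|z|²)^s is complex-differentiable on all of ℂ, i.e. Φ(z) = φ(z)·(1+|z|²)^{−s} for an entire function φ. -/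

import Mathlib

lemma cr_iff (f : ℂ → ℂ) (z : ℂ) (hf : DifferentiableAt ℝ f z) :
    DifferentiableAt ℂ f z ↔
      fderiv ℝ f z 1 + Complex.I * fderiv ℝ f z Complex.I = 0 := by
  constructor
  · intro h
    have hr : fderiv ℝ f z = (fderiv ℂ f z).restrictScalars ℝ :=
      h.fderiv_restrictScalars ℝ
    have hI : fderiv ℂ f z Complex.I = Complex.I * fderiv ℂ f z 1 := by
      have := (fderiv ℂ f z).map_smul Complex.I (1 : ℂ)
      simpa [smul_eq_mul] using this
    rw [hr]
    simp only [ContinuousLinearMap.coe_restrictScalars', hI]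
    have : Complex.I * (Complex.I * fderiv ℂ f z 1) = -fderiv ℂ f z 1 := by
      rw [← mul_assoc, Complex.I_mul_I]; ring
    rw [this]; ring
  · intro h
    rw [differentiableAt_iff_restrictScalars ℝ hf]
    refine ⟨(fderiv ℝ f z 1) • (1 : ℂ →L[ℂ] ℂ), ?_⟩
    have hb : fderiv ℝ f z Complex.I = Complex.I * fderiv ℝ f z 1 := by
      have h2 : Complex.I * (fderiv ℝ f z 1 + Complex.I * fderiv ℝ f z Complex.I) = 0 := by
        rw [h]; ring
      rw [mul_add, ← mul_assoc, Complex.I_mul_I] at h2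
      linear_combination -h2
    ext1 v
    rw [ContinuousLinearMap.coe_restrictScalars']
    have hv : (v.re : ℂ) + (v.im : ℂ) * Complex.I = v := Complex.re_add_im v
    have e1 : ((v.re : ℂ) + (v.im : ℂ) * Complex.I) =
        (v.re : ℝ) • (1 : ℂ) + (v.im : ℝ) • Complex.I := by
      simp [Complex.real_smul]
    have lhs : ((fderiv ℝ f z 1) • (1 : ℂ →L[ℂ] ℂ)) v = fderiv ℝ f z 1 * v := by
      simp
    rw [lhs]
    conv_rhs => rw [← hv, e1]
    rw [map_add, (fderiv ℝ f z).map_smul, (fderiv ℝ f z).map_smul, hb]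
    simp only [Complex.real_smul, smul_eq_mul]
    conv_lhs => rw [← hv]
    ring

lemma hasFDerivAt_W (s : ℝ) (z : ℂ) :
    HasFDerivAt (fun z : ℂ => (((1 + (z.re ^ 2 + z.im ^ 2)) ^ s : ℝ) : ℂ))
      (Complex.ofRealCLM.comp
        ((s * (1 + (z.re ^ 2 + z.im ^ 2)) ^ (s - 1)) •
          ((2 * z.re) • Complex.reCLM + (2 * z.im) • Complex.imCLM))) z := by
  have h1 : HasFDerivAt (fun z : ℂ => z.re ^ 2) ((2 * z.re) • Complex.reCLM) z := by
    have h := (Complex.reCLM.hasFDerivAt (x := z)).mul (Complex.reCLM.hasFDerivAt (x := z))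
    simpa [pow_two, two_mul, add_smul, Pi.mul_def] using h
  have h2 : HasFDerivAt (fun z : ℂ => z.im ^ 2) ((2 * z.im) • Complex.imCLM) z := by
    have h := (Complex.imCLM.hasFDerivAt (x := z)).mul (Complex.imCLM.hasFDerivAt (x := z))
    simpa [pow_two, two_mul, add_smul, Pi.mul_def] using h
  have hn : HasFDerivAt (fun z : ℂ => 1 + (z.re ^ 2 + z.im ^ 2))
      ((2 * z.re) • Complex.reCLM + (2 * z.im) • Complex.imCLM) z :=
    (h1.add h2).const_add 1
  have pos : (0 : ℝ) < 1 + (z.re ^ 2 + z.im ^ 2) := by positivity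
  have hg : HasDerivAt (fun t : ℝ => t ^ s)
      (s * (1 + (z.re ^ 2 + z.im ^ 2)) ^ (s - 1)) (1 + (z.re ^ 2 + z.im ^ 2)) := by
    simpa [mul_comm] using Real.hasDerivAt_rpow_const (p := s) (Or.inl (ne_of_gt pos))
  have hcomp := hg.comp_hasFDerivAt z hn
  exact Complex.ofRealCLM.hasFDerivAt.comp z hcomp

/-- Holomorphic polarization on the sphere chart: `D_z̄ Φ = 0` for the connection `A^{(s)}`
iff `Φ(z) = φ(z)(1+|z|²)^{−s}` with `φ` entire. -/
theorem holomorphic_polarization_sphere (s : ℝ) (Φ : ℂ → ℂ) (hΦ : Differentiable ℝ Φ) :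
    (∀ z : ℂ, fderiv ℝ Φ z 1 + Complex.I * fderiv ℝ Φ z Complex.I =
        -(2 * (s : ℂ) * z / (1 + ((z.re ^ 2 + z.im ^ 2 : ℝ) : ℂ))) * Φ z) ↔
      Differentiable ℂ (fun z : ℂ => Φ z * (((1 + (z.re ^ 2 + z.im ^ 2)) ^ s : ℝ) : ℂ)) := by
  set W : ℂ → ℂ := fun z : ℂ => (((1 + (z.re ^ 2 + z.im ^ 2)) ^ s : ℝ) : ℂ) with hWdef
  have hW : ∀ z, DifferentiableAt ℝ W z := fun z => (hasFDerivAt_W s z).differentiableAt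
  set F : ℂ → ℂ := fun z : ℂ => Φ z * W z with hFdef
  have hF : Differentiable ℝ F := fun z => (hΦ z).mul (hW z)
  have key : ∀ z : ℂ,
      fderiv ℝ F z 1 + Complex.I * fderiv ℝ F z Complex.I =
        (((1 + (z.re ^ 2 + z.im ^ 2)) ^ s : ℝ) : ℂ) *
          ((fderiv ℝ Φ z 1 + Complex.I * fderiv ℝ Φ z Complex.I) -
            (-(2 * (s : ℂ) * z / (1 + ((z.re ^ 2 + z.im ^ 2 : ℝ) : ℂ))) * Φ z)) := by
    intro z
    have pos : (0 : ℝ) < 1 + (z.re ^ 2 + z.im ^ 2) := by positivity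
    have hfd : fderiv ℝ F z = Φ z • fderiv ℝ W z + W z • fderiv ℝ Φ z :=
      fderiv_mul (hΦ z) (hW z)
    have hWz : fderiv ℝ W z = Complex.ofRealCLM.comp
        ((s * (1 + (z.re ^ 2 + z.im ^ 2)) ^ (s - 1)) •
          ((2 * z.re) • Complex.reCLM + (2 * z.im) • Complex.imCLM)) :=
      (hasFDerivAt_W s z).fderiv
    have e1 : fderiv ℝ W z 1 = ((s * (1 + (z.re ^ 2 + z.im ^ 2)) ^ (s - 1) * (2 * z.re) : ℝ) : ℂ) := by
      rw [hWz]; simp [mul_comm]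
    have e2 : fderiv ℝ W z Complex.I =
        ((s * (1 + (z.re ^ 2 + z.im ^ 2)) ^ (s - 1) * (2 * z.im) : ℝ) : ℂ) := by
      rw [hWz]; simp [mul_comm]
    have hq : ((1 + (z.re ^ 2 + z.im ^ 2) : ℝ) : ℂ) *
        (((1 + (z.re ^ 2 + z.im ^ 2)) ^ (s - 1) : ℝ) : ℂ) =
        (((1 + (z.re ^ 2 + z.im ^ 2)) ^ s : ℝ) : ℂ) := by
      rw [← Complex.ofReal_mul]
      congr 1
      rw [Real.rpow_sub pos, Real.rpow_one]
      field_simp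
    have hz : (z.re : ℂ) + (z.im : ℂ) * Complex.I = z := Complex.re_add_im z
    have hTne : ((1 + (z.re ^ 2 + z.im ^ 2) : ℝ) : ℂ) ≠ 0 := by
      exact_mod_cast ne_of_gt pos
    have hTinv : (1 + ((z.re ^ 2 + z.im ^ 2 : ℝ) : ℂ)) *
        (1 + ((z.re ^ 2 + z.im ^ 2 : ℝ) : ℂ))⁻¹ = 1 := by
      apply mul_inv_cancel₀
      push_cast at hTne ⊢
      exact hTne
    push_cast at hq hTinv
    rw [hfd]
    simp only [ContinuousLinearMap.add_apply, ContinuousLinearMap.coe_smul',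
      Pi.smul_apply, smul_eq_mul, e1, e2]
    simp only [hWdef]
    push_cast
    linear_combination (2 * (s : ℂ) * Φ z * (((1 + (z.re ^ 2 + z.im ^ 2)) ^ (s - 1) : ℝ) : ℂ)) * hz +
      (2 * (s : ℂ) * z * Φ z * (1 + ((z.re : ℂ) ^ 2 + (z.im : ℂ) ^ 2))⁻¹) * hq +
      (-2 * (s : ℂ) * z * Φ z * (((1 + (z.re ^ 2 + z.im ^ 2)) ^ (s - 1) : ℝ) : ℂ)) * hTinv
  constructor
  · intro h z
    rw [cr_iff F z (hF z), key z, h z, sub_self, mul_zero]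
  · intro h z
    have h0 := (cr_iff F z (hF z)).mp (h z)
    rw [key z] at h0
    have pos : (0 : ℝ) < 1 + (z.re ^ 2 + z.im ^ 2) := by positivity
    have hp : (((1 + (z.re ^ 2 + z.im ^ 2)) ^ s : ℝ) : ℂ) ≠ 0 := by
      exact_mod_cast ne_of_gt (Real.rpow_pos_of_pos pos s)
    exact sub_eq_zero.mp ((mul_eq_zero.mp h0).resolve_left hp)
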